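/- arXiv:2511.11070 — 6 statements merged into one kernel-verified Lean document; each statement's English description precedes it below -/
import Mathlib

section
/- Let T be a finite partial map from indices to a set V, and let i be an index with i ∈ dom(T)↑ (i.e., some element of dom(T) is a prefix of i). Let L = (M \ dom(T)↑) ∪ dom(T) for any set of indices M. Then max(L ∩ i↓) exists and equals max(dom(T) ∩ i↓). -/
/-- An index: a finite sequence of string-integer pairs with no repeated string. -/
def Index : Type := {l : List (String × ℤ) // (l.map Prod.fst).Nodup}

/-- The prefix order on indices. -/
def Index.pre (i j : Index) : Prop := i.1 <+: j.1

/-- The empty index. -/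
def emptyIdx : Index := ⟨[], by simp⟩

/-- Downward closure of a single index. -/
def down (k : Index) : Set Index := {i | Index.pre i k}

/-- Downward closure of a set of indices. -/
def downSet (L : Set Index) : Set Index := {j | ∃ l ∈ L, Index.pre j l}

/-- Upward closure of a set of indices. -/
def upSet (L : Set Index) : Set Index := {j | ∃ l ∈ L, Index.pre l j}

/-- `m` is the ⊑-greatest element of `S`. -/
def greatestIn (S : Set Index) (m : Index) : Prop := m ∈ S ∧ ∀ s ∈ S, Index.pre s m

/-- Domain of a partial map represented as an `Option`-valued function. -/
def pdom {V : Type*} (f : Index → Option V) : Set Index := {i | f i ≠ none}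

open Classical in
/-- `extend(f)(i) = f(max(dom f ∩ i↓))` when the maximum exists; undefined otherwise. -/
noncomputable def extendFun {V : Type*} (f : Index → Option V) (i : Index) : Option V :=
  if h : ∃ m, greatestIn (pdom f ∩ down i) m then f h.choose else none

open Classical in
/-- The update of `f` by `T`: `T i` on `dom T`, undefined on `(dom T)↑ \ dom T`,
`f i` otherwise. -/
noncomputable def updateMap {V : Type*} (f T : Index → Option V) : Index → Option V :=
  fun i => if i ∈ pdom T then T i else if i ∈ upSet (pdom T) then none else f i

/-- Pointwise sum of two real tensors. -/
def oplus (T T' : Index → Option ℝ) : Index → Option ℝ := fun i =>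
  match T i, T' i with
  | some a, some b => some (a + b)
  | some a, none => some a
  | none, some b => some b
  | none, none => none

/-- A coupling: a partial bijection on indices that agrees on shared strings. -/
def Coupling (R : Index → Index → Prop) : Prop :=
  (∀ i₀ i₁ j, R i₀ j → R i₁ j → i₀ = i₁) ∧
  (∀ i j₀ j₁, R i j₀ → R i j₁ → j₀ = j₁) ∧
  (∀ i₀ i₁, R i₀ i₁ → ∀ (α : String) (v₀ v₁ : ℤ),
    (α, v₀) ∈ i₀.1 → (α, v₁) ∈ i₁.1 → v₀ = v₁)

/-- The relation `P(R)` on sets of indices induced by a coupling `R`. -/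
def PRel (R : Index → Index → Prop) (L₀ L₁ : Set Index) : Prop :=
  ∀ i₀ i₁, R i₀ i₁ →
    ((i₀ ∈ upSet L₀ ↔ i₁ ∈ upSet L₁) ∧
     (i₀ ∈ upSet L₀ → ∃ m₀ m₁, greatestIn (L₀ ∩ down i₀) m₀ ∧
        greatestIn (L₁ ∩ down i₁) m₁ ∧ R m₀ m₁))

/-- The relation `[R ⇀ Δ_V]` / `Tensor_V(R)` on partial maps. -/
def TensorRel {V : Type*} (R : Index → Index → Prop) (T₀ T₁ : Index → Option V) : Prop :=
  ∀ i₀ i₁, R i₀ i₁ →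
    ((i₀ ∈ pdom T₀ ↔ i₁ ∈ pdom T₁) ∧ (i₀ ∈ pdom T₀ → T₀ i₀ = T₁ i₁))

/-- The relation `Tensor†_V(R)` on partial maps (via `extend`). -/
def TensorDagRel {V : Type*} (R : Index → Index → Prop) (T₀ T₁ : Index → Option V) : Prop :=
  ∀ i₀ i₁, R i₀ i₁ →
    ((i₀ ∈ upSet (pdom T₀) ↔ i₁ ∈ upSet (pdom T₁)) ∧
     (i₀ ∈ upSet (pdom T₀) → extendFun T₀ i₀ = extendFun T₁ i₁))

/-- A well-formed state: each variable stores a finite partial map containing `[]`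
in its domain. -/
def WFState {Var V : Type*} (σ : Var → Index → Option V) : Prop :=
  ∀ y, (pdom (σ y)).Finite ∧ emptyIdx ∈ pdom (σ y)

/-- The relation `State(R)` on states. -/
def StateRel {Var V : Type*} (R : Index → Index → Prop)
    (σ₀ σ₁ : Var → Index → Option V) : Prop :=
  ∀ x, TensorDagRel R (σ₀ x) (σ₁ x)

/-- The state update `σ[x : T]`. -/
noncomputable def updState {Var V : Type*} [DecidableEq Var]
    (σ : Var → Index → Option V) (x : Var) (T : Index → Option V) :
    Var → Index → Option V :=
  fun y => if y = x then updateMap (σ y) T else σ y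

/-- An antichain of indices: no two distinct elements are ⊑-comparable. -/
def IsAntichainIdx (A : Set Index) : Prop :=
  ∀ i ∈ A, ∀ j ∈ A, Index.pre i j → i = j

/-!
The prefixes of `i` form a finite chain, so the nonempty set `dom(T) ∩ i↓` has a greatest
element `m` (its longest member). No index of `L ∩ i↓` outside `dom(T)` can lie above `m`,
since it would then belong to `dom(T)↑`; by comparability it lies below `m`.
-/

theorem down_finite (i : Index) : (down i).Finite :=
  (List.finite_toSet i.1.inits).preimage Subtype.val_injective.injOn |>.subset
    fun _ h => (List.mem_inits _ _).2 h

theorem exists_greatestIn_of_subset_down {S : Set Index} {i : Index} (hS : S ⊆ down i)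
    (hne : S.Nonempty) : ∃ m, greatestIn S m := by
  obtain ⟨m, hm, hlongest⟩ :=
    Set.exists_max_image S (fun s => s.1.length) ((down_finite i).subset hS) hne
  exact ⟨m, hm, fun s hs => List.prefix_of_prefix_length_le (hS hs) (hS hm) (hlongest s hs)⟩

theorem greatestIn_union_diff_upSet {D : Set Index} (M : Set Index) {i m : Index}
    (hm : greatestIn (D ∩ down i) m) :
    greatestIn (((M \ upSet D) ∪ D) ∩ down i) m := by
  refine ⟨⟨Or.inr hm.1.1, hm.1.2⟩, fun s ⟨hsL, hsi⟩ => ?_⟩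
  rcases hsL with ⟨-, hsD⟩ | hsD
  · rcases List.prefix_or_prefix_of_prefix hsi hm.1.2 with hsm | hms
    · exact hsm
    · exact absurd ⟨m, hm.1.1, hms⟩ hsD
  · exact hm.2 s ⟨hsD, hsi⟩

theorem stmt3_general {V : Type*} (T : Index → Option V)
    (M : Set Index) (i : Index) (hi : i ∈ upSet (pdom T)) :
    ∃ m, greatestIn (pdom T ∩ down i) m ∧
      greatestIn (((M \ upSet (pdom T)) ∪ pdom T) ∩ down i) m := by
  obtain ⟨l, hl, hli⟩ := hi
  obtain ⟨m, hm⟩ := exists_greatestIn_of_subset_down Set.inter_subset_right ⟨l, hl, hli⟩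
  exact ⟨m, hm, greatestIn_union_diff_upSet M hm⟩

theorem stmt3 {V : Type*} (T : Index → Option V) (hfin : (pdom T).Finite)
    (M : Set Index) (i : Index) (hi : i ∈ upSet (pdom T)) :
    ∃ m, greatestIn (pdom T ∩ down i) m ∧
      greatestIn (((M \ upSet (pdom T)) ∪ pdom T) ∩ down i) m :=
  stmt3_general T M i hi
end

section
/- Let R be a coupling and L₀, L₁ sets of indices with L₀ [P(R)] L₁. Then for all indices i₀, i₁ with i₀ R i₁, we have i₀ ∈ L₀ if and only if i₁ ∈ L₁. -/
lemma pre_antisymm {i j : Index} (h : Index.pre i j) (h' : Index.pre j i) : i = j :=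
  Subtype.ext (h.eq_of_length_le h'.length_le)

theorem stmt8 (R : Index → Index → Prop) (hR : Coupling R)
    (L₀ L₁ : Set Index) (hP : PRel R L₀ L₁) :
    ∀ i₀ i₁, R i₀ i₁ → (i₀ ∈ L₀ ↔ i₁ ∈ L₁) := by
  intro i₀ i₁ hr
  obtain ⟨hiff, hmax⟩ := hP i₀ i₁ hr
  constructor
  · intro h0
    obtain ⟨m₀, m₁, hg₀, hg₁, hrm⟩ := hmax ⟨i₀, h0, List.prefix_refl _⟩
    have hm₀ : m₀ = i₀ := pre_antisymm hg₀.1.2 (hg₀.2 i₀ ⟨h0, List.prefix_refl _⟩)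
    have : m₁ = i₁ := (hR.2.1) i₀ m₁ i₁ (hm₀ ▸ hrm) hr
    exact this ▸ hg₁.1.1
  · intro h1
    have hup : i₀ ∈ upSet L₀ := hiff.mpr ⟨i₁, h1, List.prefix_refl _⟩
    obtain ⟨m₀, m₁, hg₀, hg₁, hrm⟩ := hmax hup
    have hm₁ : m₁ = i₁ := pre_antisymm hg₁.1.2 (hg₁.2 i₁ ⟨h1, List.prefix_refl _⟩)
    have : m₀ = i₀ := (hR.1) m₀ i₀ i₁ (hm₁ ▸ hrm) hr
    exact this ▸ hg₀.1.1
end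

section
/- Let R be a coupling and f₀, f₁ : Index ⇀ V finite partial functions such that dom(f₀) [P(R)] dom(f₁) and f₀ [R ⇀ Δ_V] f₁. Then extend(f₀) [R ⇀ Δ_V] extend(f₁). -/
lemma greatestIn_unique {S : Set Index} {m m' : Index}
    (h : greatestIn S m) (h' : greatestIn S m') : m = m' := by
  have h1 := h.2 m' h'.1
  have h2 := h'.2 m h.1
  exact Subtype.ext (h2.eq_of_length_le h1.length_le)

lemma extendFun_eq {V : Type*} {f : Index → Option V} {i m : Index}
    (h : greatestIn (pdom f ∩ down i) m) : extendFun f i = f m := by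
  have hex : ∃ m, greatestIn (pdom f ∩ down i) m := ⟨m, h⟩
  rw [extendFun, dif_pos hex]
  exact congrArg f (greatestIn_unique hex.choose_spec h)

lemma extendFun_none {V : Type*} {f : Index → Option V} {i : Index}
    (h : i ∉ upSet (pdom f)) : extendFun f i = none := by
  rw [extendFun, dif_neg]
  rintro ⟨m, hm, -⟩
  exact h ⟨m, hm.1, hm.2⟩

theorem stmt10 {V : Type*} (R : Index → Index → Prop) (hR : Coupling R)
    (f₀ f₁ : Index → Option V)
    (hf₀ : (pdom f₀).Finite) (hf₁ : (pdom f₁).Finite)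
    (hdom : PRel R (pdom f₀) (pdom f₁)) (hrel : TensorRel R f₀ f₁) :
    TensorRel R (extendFun f₀) (extendFun f₁) := by
  intro i₀ i₁ h
  obtain ⟨hiff, hmax⟩ := hdom i₀ i₁ h
  by_cases hup : i₀ ∈ upSet (pdom f₀)
  · obtain ⟨m₀, m₁, hg₀, hg₁, hRm⟩ := hmax hup
    have e₀ : extendFun f₀ i₀ = f₀ m₀ := extendFun_eq hg₀
    have e₁ : extendFun f₁ i₁ = f₁ m₁ := extendFun_eq hg₁
    have hv := (hrel m₀ m₁ hRm).2 hg₀.1.1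
    constructor
    · simp only [pdom, Set.mem_setOf_eq, e₀, e₁, hv]
    · intro _; rw [e₀, e₁, hv]
  · have hup' : i₁ ∉ upSet (pdom f₁) := fun h' => hup (hiff.mpr h')
    have e₀ : extendFun f₀ i₀ = none := extendFun_none hup
    have e₁ : extendFun f₁ i₁ = none := extendFun_none hup'
    constructor
    · simp [pdom, e₀, e₁]
    · intro hc; exact absurd e₀ hc
end

section
/- Let σ be a state, x a variable, and T : Index ⇀ V a tensor with L = dom(T). Then σ[x : T] =_{(L↑)ᶜ} σ; that is, for every variable y and every index i not in the upward closure of L, extend(σ[x : T](y))(i) = extend(σ(y))(i). -/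
lemma extend_congr {V : Type*} (f g : Index → Option V) (i : Index)
    (h : ∀ j ∈ down i, g j = f j) : extendFun g i = extendFun f i := by
  have hset : pdom g ∩ down i = pdom f ∩ down i := by
    ext j
    constructor <;> rintro ⟨hj, hd⟩ <;> refine ⟨?_, hd⟩ <;>
      simpa [pdom, h j hd] using hj
  unfold extendFun
  rw [hset]
  split_ifs with hex
  · exact h _ hex.choose_spec.1.2
  · rfl

theorem stmt13 {Var V : Type*} [DecidableEq Var]
    (σ : Var → Index → Option V) (hw : WFState σ)
    (x : Var) (T : Index → Option V) (hT : (pdom T).Finite) :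
    ∀ (y : Var) (i : Index), i ∉ upSet (pdom T) →
      extendFun (updState σ x T y) i = extendFun (σ y) i := by
  intro y i hi
  unfold updState
  by_cases hyx : y = x
  · simp only [hyx, if_pos rfl]
    apply extend_congr
    intro j hj
    have hnup : j ∉ upSet (pdom T) := by
      rintro ⟨l, hl, hpre⟩
      exact hi ⟨l, hl, List.IsPrefix.trans hpre hj⟩
    have hnd : j ∉ pdom T := fun hjd => hnup ⟨j, hjd, List.prefix_refl _⟩
    simp [updateMap, hnd, hnup]
  · simp [hyx]
end

section
/- Let R be a coupling, A₀, A₁ antichains of indices with A₀ [P(R)] A₁, and A₀' ⊆ A₀, A₁' ⊆ A₁ subsets determined by a predicate respected by R, in the following sense: there is a function v assigning to each index in A₀ ∪ A₁ a value such that v(i₀) = v(i₁) whenever i₀ R i₁ with i₀ ∈ A₀, i₁ ∈ A₁, and A₀' = {i ∈ A₀ : v(i) = 0}, A₁' = {i ∈ A₁ : v(i) = 0}. Then A₀' [P(R)] A₁'. -/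
theorem stmt17 (R : Index → Index → Prop) (hR : Coupling R)
    (A₀ A₁ : Set Index)
    (hA₀ : IsAntichainIdx A₀) (hA₁ : IsAntichainIdx A₁)
    (hP : PRel R A₀ A₁) (v : Index → ℤ)
    (hv : ∀ i₀ i₁, R i₀ i₁ → i₀ ∈ A₀ → i₁ ∈ A₁ → v i₀ = v i₁) :
    PRel R {i | i ∈ A₀ ∧ v i = 0} {i | i ∈ A₁ ∧ v i = 0} := by
  intro i₀ i₁ hRi
  obtain ⟨hiff, hmax⟩ := hP i₀ i₁ hRi
  -- auxiliary: from membership in upSet of the subset on one side, derive everything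
  have key : i₀ ∈ upSet {i | i ∈ A₀ ∧ v i = 0} ∨ i₁ ∈ upSet {i | i ∈ A₁ ∧ v i = 0} →
      ∃ m₀ m₁, greatestIn ({i | i ∈ A₀ ∧ v i = 0} ∩ down i₀) m₀ ∧
        greatestIn ({i | i ∈ A₁ ∩ {i | v i = 0}} ∩ down i₁) m₁ ∧ R m₀ m₁ := by
    intro h
    have hup₀ : i₀ ∈ upSet A₀ := by
      rcases h with ⟨a, ⟨ha, _⟩, hpre⟩ | ⟨a, ⟨ha, _⟩, hpre⟩
      · exact ⟨a, ha, hpre⟩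
      · exact hiff.mpr ⟨a, ha, hpre⟩
    obtain ⟨m₀, m₁, hg₀, hg₁, hRm⟩ := hmax hup₀
    have hv0 : v m₀ = 0 := by
      rcases h with ⟨a, ⟨ha, hva⟩, hpre⟩ | ⟨a, ⟨ha, hva⟩, hpre⟩
      · have : a = m₀ := hA₀ a ha m₀ hg₀.1.1 (hg₀.2 a ⟨ha, hpre⟩)
        rw [← this]; exact hva
      · have : a = m₁ := hA₁ a ha m₁ hg₁.1.1 (hg₁.2 a ⟨ha, hpre⟩)
        rw [hv m₀ m₁ hRm hg₀.1.1 hg₁.1.1, ← this]; exact hva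
    have hv1 : v m₁ = 0 := by rw [← hv m₀ m₁ hRm hg₀.1.1 hg₁.1.1]; exact hv0
    refine ⟨m₀, m₁, ⟨⟨⟨hg₀.1.1, hv0⟩, hg₀.1.2⟩, ?_⟩, ⟨⟨⟨hg₁.1.1, hv1⟩, hg₁.1.2⟩, ?_⟩, hRm⟩
    · intro s hs; exact hg₀.2 s ⟨hs.1.1, hs.2⟩
    · intro s hs; exact hg₁.2 s ⟨hs.1.1, hs.2⟩
  constructor
  · constructor
    · intro h
      obtain ⟨m₀, m₁, _, hg₁, _⟩ := key (Or.inl h)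
      exact ⟨m₁, hg₁.1.1, hg₁.1.2⟩
    · intro h
      obtain ⟨m₀, m₁, hg₀, _, _⟩ := key (Or.inr h)
      exact ⟨m₀, hg₀.1.1, hg₀.1.2⟩
  · intro h
    exact key (Or.inl h)
end

section
/- Let R be a coupling between indices, A a finite antichain of indices, α a string not occurring in any index of A, and n ≥ 1. For each k ∈ {0,…,n−1} define the relation R^(k) by i₀ R^(k) i₁' iff there exists i₁ with i₀ R i₁, i₀ and i₁ belonging to given antichains A₀ and A₁ respectively, and i₁' = i₁ ⧺ [(α,k)]. Then each R^(k) is a coupling, and if moreover A₀ [P(R ∩ (A₀×A₁))] A₁ holds with A₀, A₁ antichains and A₁' = {i ⧺ [(α,k)] : i ∈ A₁, k ∈ {0,…,n−1}}, then A₀ [P(R^(k))] A₁' for every k. -/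
/-- The relation `R^(k)` used in the extend-index case of the soundness proof. -/
def Rk (R : Index → Index → Prop) (A₀ A₁ : Set Index) (α : String) (k : ℕ) :
    Index → Index → Prop :=
  fun i₀ i₁' => ∃ i₁, R i₀ i₁ ∧ i₀ ∈ A₀ ∧ i₁ ∈ A₁ ∧
    i₁'.1 = i₁.1 ++ [(α, (k : ℤ))]

/-- `A₁' = { i ⧺ [(α,k)] : i ∈ A₁, k < n }`. -/
def A1ext (A₁ : Set Index) (α : String) (n : ℕ) : Set Index :=
  {j | ∃ i₁ ∈ A₁, ∃ k : ℕ, k < n ∧ j.1 = i₁.1 ++ [(α, (k : ℤ))]}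

theorem stmt18 (R : Index → Index → Prop) (hR : Coupling R)
    (A₀ A₁ : Set Index) (hA₀fin : A₀.Finite) (hA₁fin : A₁.Finite)
    (hA₀ : IsAntichainIdx A₀) (hA₁ : IsAntichainIdx A₁)
    (α : String)
    (hα : ∀ i, i ∈ A₀ ∪ A₁ → α ∉ i.1.map Prod.fst)
    (n : ℕ) (hn : 1 ≤ n) :
    (∀ k < n, Coupling (Rk R A₀ A₁ α k)) ∧
    (PRel (fun i j => R i j ∧ i ∈ A₀ ∧ j ∈ A₁) A₀ A₁ →
      ∀ k < n, PRel (Rk R A₀ A₁ α k) A₀ (A1ext A₁ α n)) := by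

  constructor
  · intro k hk
    refine ⟨?_, ?_, ?_⟩
    · rintro i₀ i₀' j ⟨i₁, hRi, _, _, hj⟩ ⟨i₁', hRi', _, _, hj'⟩
      have : i₁ = i₁' := Subtype.ext (List.append_cancel_right (hj ▸ hj'))
      exact hR.1 i₀ i₀' i₁ hRi (this ▸ hRi')
    · rintro i j₀ j₁ ⟨i₁, hRi, _, _, hj⟩ ⟨i₁', hRi', _, _, hj'⟩
      have : i₁ = i₁' := hR.2.1 i i₁ i₁' hRi hRi'
      exact Subtype.ext (by rw [hj, hj', this])
    · rintro i₀ j ⟨i₁, hRi, hi₀, hi₁, hj⟩ β v₀ v₁ hv₀ hv₁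
      rw [hj, List.mem_append] at hv₁
      rcases hv₁ with hv₁ | hv₁
      · exact hR.2.2 i₀ i₁ hRi β v₀ v₁ hv₀ hv₁
      · simp at hv₁
        exfalso
        apply hα i₀ (Or.inl hi₀)
        rw [← hv₁.1]
        exact List.mem_map.mpr ⟨(β, v₀), hv₀, rfl⟩
  · rintro _ k hk i₀ j ⟨i₁, hRi, hi₀, hi₁, hj⟩
    have hup₀ : i₀ ∈ upSet A₀ := ⟨i₀, hi₀, List.prefix_refl _⟩
    have hjA : j ∈ A1ext A₁ α n := ⟨i₁, hi₁, k, hk, hj⟩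
    refine ⟨⟨fun _ => ⟨j, hjA, List.prefix_refl _⟩, fun _ => hup₀⟩, fun _ => ?_⟩
    exact ⟨i₀, j, ⟨⟨hi₀, List.prefix_refl _⟩, fun s hs => hs.2⟩,
      ⟨⟨hjA, List.prefix_refl _⟩, fun s hs => hs.2⟩, ⟨i₁, hRi, hi₀, hi₁, hj⟩⟩
end
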